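/- Let r ≥ 0 be an integer and write r = 6r₀ + r₁ with r₀ ≥ 0 and 0 ≤ r₁ ≤ 5. Then in ℤ[[u]] one has ((1-u)(1-u²))^{r₀}·P_r(1,u) = u^{3r₀}·P_{r₁}(1,u). Consequently, the numerical multiplicity p_{s,r}(1) (the multiplicity [D(2,sω) : D(3,rω)] of the level-three Demazure module D(3,rω) in a level-three Demazure flag of the level-two Demazure module D(2,sω) for the current algebra of sl₂) is the appropriate coefficient of the rational power series u^{3r₀}·P_{r₁}(1,u)/((1-u)^{r₀}(1-u²)^{r₀}). -/

import Mathlib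

open scoped PowerSeries

/-- The polynomials `p_{s,r}(q) ∈ ℤ[q]` (the graded multiplicities
`[D(2,sω) : D(3,rω)]_q`): `p_{0,0} = p_{1,1} = p_{2,2} = 1`; `p_{s,r} = 0` whenever
`r > s`, or `s - r` is odd, or `s ≤ 2` and `(s,r) ∉ {(0,0),(1,1),(2,2)}`; and for
`s ≥ 3` with `r ≤ s` and `s - r` even, writing `s = 2s₁ + s₀` with `s₀ ∈ {0,1}`,
`p_{s,r} = q^{(s-r)/2} p_{s-3,r-3} + q^{(s₁+s₀-1)(2-s₀)} p_{s-4+2s₀,r}` if `r ≥ 3`, and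
`p_{s,r} = q^{(s₁+s₀-1)(2-s₀)} p_{s-4+2s₀,r}` if `0 ≤ r ≤ 2`. -/
noncomputable def pp : ℕ → ℕ → Polynomial ℤ
  | 0, r => if r = 0 then 1 else 0
  | 1, r => if r = 1 then 1 else 0
  | 2, r => if r = 2 then 1 else 0
  | (s + 3), r =>
    if (s + 3) < r ∨ (s + 3) % 2 ≠ r % 2 then 0
    else
      (if 3 ≤ r then Polynomial.X ^ (((s + 3) - r) / 2) * pp s (r - 3) else 0)
        + Polynomial.X ^ (((s + 3) / 2 + (s + 3) % 2 - 1) * (2 - (s + 3) % 2))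
            * pp ((s + 3) + 2 * ((s + 3) % 2) - 4) r
  termination_by s _ => s
  decreasing_by
  · omega
  · omega

/-- The generating series `P_m(q,u)`: for `m` even, `P_m(q,u) = Σ_{s≥0} p_{2s,m} u^s`;
for `m` odd, `P_m(q,u) = Σ_{s≥0} p_{2s+1,m} u^{s+1}`.  A formal power series in `u` with
coefficients in `ℤ[q]`. -/
noncomputable def Pser (m : ℕ) : PowerSeries (Polynomial ℤ) :=
  PowerSeries.mk fun n =>
    if m % 2 = 0 then pp (2 * n) m else if n = 0 then 0 else pp (2 * n - 1) m

/-- `thetaSubst a c` is the substituted partial theta series `Θ(a, c·u²) ∈ ℤ[q]⟦u⟧`,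
i.e. `Σ_{s≥0} a^{s²} c^s u^{2s}`, where `Θ(q,u) = Σ_{s≥0} q^{s²}u^s`. -/
noncomputable def thetaSubst (a c : Polynomial ℤ) : PowerSeries (Polynomial ℤ) :=
  PowerSeries.mk fun n => if n % 2 = 0 then a ^ ((n / 2) ^ 2) * c ^ (n / 2) else 0

/-- `P_m(1,u) ∈ ℤ⟦u⟧`, obtained from `P_m(q,u)` by evaluating each coefficient at
`q = 1`. -/
noncomputable def Pone (m : ℕ) : PowerSeries ℤ :=
  PowerSeries.map (Polynomial.evalRingHom (1 : ℤ)) (Pser m)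

/-! At `q = 1` the recursion for `p_{s,r}` turns into two functional equations for the
generating series: `(1 - u²) P_{r+3} = u P_r` when `r` is odd and `(1 - u) P_{r+3} = u² P_r`
when `r` is even. Applying one after the other lowers `r` by six, trading the factor
`(1 - u)(1 - u²)` for `u³`, and induction on `r₀` gives the theorem. -/

open PowerSeries

lemma pp_eq_zero_of_lt : ∀ {s r : ℕ}, s < r → pp s r = 0
  | 0, r, h => by rw [pp, if_neg (by omega)]
  | 1, r, h => by rw [pp, if_neg (by omega)]
  | 2, r, h => by rw [pp, if_neg (by omega)]
  | s + 3, r, h => by rw [pp, if_pos (Or.inl h)]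

lemma pp_eq_zero_of_mod_two_ne : ∀ {s r : ℕ}, s % 2 ≠ r % 2 → pp s r = 0
  | 0, r, h => by rw [pp, if_neg (by omega)]
  | 1, r, h => by rw [pp, if_neg (by omega)]
  | 2, r, h => by rw [pp, if_neg (by omega)]
  | s + 3, r, h => by rw [pp, if_pos (Or.inr h)]

/-- At `q = 1` the defining recursion holds without side conditions, since in the cases the
definition excludes both sides vanish. -/
lemma eval_one_pp_add_three (s r : ℕ) :
    (pp (s + 3) (r + 3)).eval 1
      = (pp s r).eval 1 + (pp (s + 3 + 2 * ((s + 3) % 2) - 4) (r + 3)).eval 1 := by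
  rw [pp]
  split_ifs with hex
  · rcases hex with hlt | hpar
    · rw [pp_eq_zero_of_lt (by omega), pp_eq_zero_of_lt (by omega)]; simp
    · rw [pp_eq_zero_of_mod_two_ne (by omega), pp_eq_zero_of_mod_two_ne (by omega)]; simp
  · simp
  · omega

lemma eval_one_pp_even_add_four (k r : ℕ) :
    (pp (2 * k + 4) (r + 3)).eval 1 = (pp (2 * k + 1) r).eval 1 + (pp (2 * k) (r + 3)).eval 1 := by
  simpa [show 2 * k + 1 + 3 + 2 * ((2 * k + 1 + 3) % 2) - 4 = 2 * k by omega]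
    using eval_one_pp_add_three (2 * k + 1) r

lemma eval_one_pp_odd_add_three (k r : ℕ) :
    (pp (2 * k + 3) (r + 3)).eval 1 = (pp (2 * k) r).eval 1 + (pp (2 * k + 1) (r + 3)).eval 1 := by
  simpa [show 2 * k + 3 + 2 * ((2 * k + 3) % 2) - 4 = 2 * k + 1 by omega]
    using eval_one_pp_add_three (2 * k) r

lemma coeff_Pone_of_even {m : ℕ} (hm : Even m) (n : ℕ) :
    coeff n (Pone m) = (pp (2 * n) m).eval 1 := by
  simp [Pone, Pser, Nat.even_iff.mp hm]

lemma coeff_zero_Pone_of_odd {m : ℕ} (hm : Odd m) : coeff 0 (Pone m) = 0 := by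
  simp [Pone, Pser, Nat.odd_iff.mp hm]

lemma coeff_succ_Pone_of_odd {m : ℕ} (hm : Odd m) (n : ℕ) :
    coeff (n + 1) (Pone m) = (pp (2 * n + 1) m).eval 1 := by
  simp [Pone, Pser, Nat.odd_iff.mp hm, show 2 * (n + 1) - 1 = 2 * n + 1 by omega]

lemma one_sub_X_sq_mul_Pone_add_three {r : ℕ} (hr : Odd r) :
    (1 - X ^ 2) * Pone (r + 3) = X * Pone r := by
  have hr3 : Even (r + 3) := hr.add_odd ⟨1, rfl⟩
  ext n
  rw [sub_mul, one_mul, map_sub, coeff_X_pow_mul', coeff_Pone_of_even hr3]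
  rcases n with _ | _ | k
  · simp [pp_eq_zero_of_lt]
  · simp [coeff_zero_Pone_of_odd hr, pp_eq_zero_of_lt (show 2 < r + 3 by omega)]
  · simp only [coeff_succ_X_mul, coeff_succ_Pone_of_odd hr, coeff_Pone_of_even hr3,
      if_pos (show 2 ≤ k + 2 by omega), show 2 * (k + 2) = 2 * k + 4 by ring,
      show k + 1 + 1 - 2 = k by omega, eval_one_pp_even_add_four]
    ring

lemma one_sub_X_mul_Pone_add_three {r : ℕ} (hr : Even r) :
    (1 - X) * Pone (r + 3) = X ^ 2 * Pone r := by
  have hr3 : Odd (r + 3) := hr.add_odd ⟨1, rfl⟩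
  ext n
  rw [sub_mul, one_mul, map_sub, coeff_X_pow_mul']
  rcases n with _ | _ | k
  · simp [coeff_zero_Pone_of_odd hr3]
  · simp [coeff_succ_Pone_of_odd hr3, coeff_zero_Pone_of_odd hr3,
      pp_eq_zero_of_lt (show 1 < r + 3 by omega)]
  · simp only [coeff_succ_X_mul, coeff_succ_Pone_of_odd hr3, coeff_Pone_of_even hr,
      if_pos (show 2 ≤ k + 2 by omega), show 2 * (k + 1) + 1 = 2 * k + 3 by ring,
      show k + 1 + 1 - 2 = k by omega, eval_one_pp_odd_add_three]
    ring

lemma one_sub_X_mul_one_sub_X_sq_mul_Pone_add_six (r : ℕ) :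
    (1 - X) * (1 - X ^ 2) * Pone (r + 6) = X ^ 3 * Pone r := by
  rcases Nat.even_or_odd r with hr | hr
  · have hr3 : Odd (r + 3) := hr.add_odd ⟨1, rfl⟩
    calc (1 - X) * (1 - X ^ 2) * Pone (r + 6)
        = (1 - X) * ((1 - X ^ 2) * Pone (r + 3 + 3)) := by ring
      _ = X ^ 3 * Pone r := by
        rw [one_sub_X_sq_mul_Pone_add_three hr3, mul_left_comm,
          one_sub_X_mul_Pone_add_three hr]; ring
  · have hr3 : Even (r + 3) := hr.add_odd ⟨1, rfl⟩
    calc (1 - X) * (1 - X ^ 2) * Pone (r + 6)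
        = (1 - X ^ 2) * ((1 - X) * Pone (r + 3 + 3)) := by ring
      _ = X ^ 3 * Pone r := by
        rw [one_sub_X_mul_Pone_add_three hr3, mul_left_comm,
          one_sub_X_sq_mul_Pone_add_three hr]; ring

theorem stmt19_general (r r₀ r₁ : ℕ) (h : r = 6 * r₀ + r₁) :
    ((1 - PowerSeries.X) * (1 - PowerSeries.X ^ 2)) ^ r₀ * Pone r
      = PowerSeries.X ^ (3 * r₀) * Pone r₁ := by
  subst h
  induction r₀ with
  | zero => simp
  | succ k ih =>
    calc ((1 - X) * (1 - X ^ 2)) ^ (k + 1) * Pone (6 * (k + 1) + r₁)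
        = ((1 - X) * (1 - X ^ 2)) ^ k * ((1 - X) * (1 - X ^ 2) * Pone (6 * k + r₁ + 6)) := by
          rw [show 6 * (k + 1) + r₁ = 6 * k + r₁ + 6 by omega]; ring
      _ = X ^ 3 * (((1 - X) * (1 - X ^ 2)) ^ k * Pone (6 * k + r₁)) := by
          rw [one_sub_X_mul_one_sub_X_sq_mul_Pone_add_six]; ring
      _ = X ^ (3 * (k + 1)) * Pone r₁ := by rw [ih]; ring

/-- Let `r ≥ 0` and write `r = 6r₀ + r₁` with `r₀ ≥ 0`, `0 ≤ r₁ ≤ 5`.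
Then in `ℤ⟦u⟧`: `((1-u)(1-u²))^{r₀}·P_r(1,u) = u^{3r₀}·P_{r₁}(1,u)`.  Consequently the
numerical multiplicity `p_{s,r}(1) = [D(2,sω) : D(3,rω)]` is the appropriate
coefficient of the rational power series
`u^{3r₀}·P_{r₁}(1,u)/((1-u)^{r₀}(1-u²)^{r₀})`. -/
theorem stmt19 (r r₀ r₁ : ℕ) (h : r = 6 * r₀ + r₁) (h₁ : r₁ ≤ 5) :
    ((1 - PowerSeries.X) * (1 - PowerSeries.X ^ 2)) ^ r₀ * Pone r
      = PowerSeries.X ^ (3 * r₀) * Pone r₁ :=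
  stmt19_general r r₀ r₁ h
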